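/- Let N be a finite nonempty player set and for each nonempty S ⊆ N let ν_S be a probability measure on ℝ whose identity function is integrable, with mean μ_S = ∫ z dν_S(z). Suppose there exist d, r : N → ℝ with r_i ≥ 0 for all i, d(N) = μ_N, r(N) = 1, such that for every nonempty S ⊆ N the pushforward of ν_N under the map z ↦ d(S) + r(S)·(z − μ_N) second-order stochastically dominates ν_S. Then the core of the mean game μ (the TU-game with value μ_S on each nonempty S and 0 on ∅) is nonempty; indeed d itself lies in C(μ). -/

import Mathlib

open MeasureTheory ProbabilityTheory
open scoped NNReal ENNReal

/-- `P` second-order stochastically dominates `Q`. -/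
def SSD (P Q : Measure ℝ) : Prop :=
  ∀ u : ℝ, (∫ z in Set.Iic u, (cdf P z - cdf Q z)) ≤ 0

/-- The core of a TU-game `v` on the finite player set `N`. -/
def core {N : Type*} [Fintype N] (v : Finset N → ℝ) : Set (N → ℝ) :=
  {x | (∀ S : Finset N, v S ≤ ∑ i ∈ S, x i) ∧ ∑ i : N, x i = v Finset.univ}

/-!
By Tonelli, `∫_{(-∞, u]} F_P = E_P (u - X)⁺ = u - E_P min(X, u)`, so `P ⪰_SSD Q` gives
`E_Q min(X, u) ≤ E_P min(X, u)` for every `u`; letting `u → ∞` (dominated convergence) yields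
`E_Q X ≤ E_P X`. The pushforward of `ν_N` under `z ↦ d(S) + r(S)(z - μ_N)` has mean `d(S)`,
so `μ_S ≤ d(S)` for every coalition, while `d(N) = μ_N` is assumed.
-/

open Set Filter Topology

namespace ProbabilityTheory

variable (P : Measure ℝ) [IsProbabilityMeasure P]

theorem lintegral_Iic_ofReal_cdf (u : ℝ) :
    ∫⁻ z in Iic u, ENNReal.ofReal (cdf P z) = ∫⁻ x, ENNReal.ofReal (u - x) ∂P := by
  let below : Set (ℝ × ℝ) := {p | p.2 ≤ p.1}
  have hbelow : MeasurableSet below := measurableSet_le measurable_snd measurable_fst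
  calc ∫⁻ z in Iic u, ENNReal.ofReal (cdf P z)
      = ∫⁻ z in Iic u, ∫⁻ x, below.indicator 1 (z, x) ∂P := by
        refine lintegral_congr fun z => ?_
        rw [ofReal_cdf, ← lintegral_indicator_one measurableSet_Iic]
        rfl
    _ = ∫⁻ x, (∫⁻ z in Iic u, below.indicator 1 (z, x)) ∂P :=
        lintegral_lintegral_swap (measurable_one.indicator hbelow).aemeasurable
    _ = ∫⁻ x, ENNReal.ofReal (u - x) ∂P := by
        refine lintegral_congr fun x => ?_
        rw [show (fun z => below.indicator 1 (z, x)) = (Ici x).indicator (1 : ℝ → ℝ≥0∞) from rfl,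
          lintegral_indicator_one measurableSet_Ici, Measure.restrict_apply measurableSet_Ici,
          Ici_inter_Iic, Real.volume_Icc]

variable {P}

theorem integrableOn_Iic_cdf (hP : Integrable (fun x => x) P) (u : ℝ) :
    IntegrableOn (cdf P) (Iic u) := by
  refine ⟨(monotone_cdf P).measurable.aestronglyMeasurable, ?_⟩
  rw [hasFiniteIntegral_iff_ofReal (.of_forall (cdf_nonneg P)), lintegral_Iic_ofReal_cdf]
  exact (((integrable_const u).sub hP).ofReal).lintegral_lt_top

theorem integral_Iic_cdf (hP : Integrable (fun x => x) P) (u : ℝ) :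
    ∫ z in Iic u, cdf P z = ∫ x, max (u - x) 0 ∂P := by
  have hmax : Integrable (fun x => max (u - x) 0) P :=
    ((integrable_const u).sub hP).sup (integrable_const 0)
  rw [integral_eq_lintegral_of_nonneg_ae (.of_forall (cdf_nonneg P))
      (monotone_cdf P).measurable.aestronglyMeasurable,
    integral_eq_lintegral_of_nonneg_ae (.of_forall fun x => le_max_right (u - x) 0)
      hmax.aestronglyMeasurable, lintegral_Iic_ofReal_cdf]
  simp only [ENNReal.ofReal_max, ENNReal.ofReal_zero, max_zero]

theorem integral_min_eq_sub_integral_Iic_cdf (hP : Integrable (fun x => x) P) (u : ℝ) :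
    ∫ x, min x u ∂P = u - ∫ z in Iic u, cdf P z := by
  have hmin : Integrable (fun x => min x u) P := hP.inf (integrable_const u)
  have hmax : Integrable (fun x => max (u - x) 0) P :=
    ((integrable_const u).sub hP).sup (integrable_const 0)
  rw [integral_Iic_cdf hP, eq_sub_iff_add_eq, ← integral_add hmin hmax]
  calc ∫ x, (min x u + max (u - x) 0) ∂P = ∫ _, u ∂P := by
        congr 1 with x
        cases min_cases x u <;> cases max_cases (u - x) 0 <;> linarith
    _ = u := by simp

end ProbabilityTheory

theorem MeasureTheory.tendsto_integral_min_atTop {μ : Measure ℝ}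
    (hμ : Integrable (fun x => x) μ) :
    Tendsto (fun u => ∫ x, min x u ∂μ) atTop (𝓝 (∫ x, x ∂μ)) := by
  refine tendsto_integral_filter_of_dominated_convergence (fun x => |x|)
    (.of_forall fun u => (continuous_id.min continuous_const).aestronglyMeasurable) ?_ hμ.abs
    (.of_forall fun x => ?_)
  · filter_upwards [eventually_ge_atTop 0] with u hu
    refine .of_forall fun x => ?_
    rw [Real.norm_eq_abs, abs_le]
    constructor <;> cases abs_cases x <;> cases min_cases x u <;> linarith
  · exact tendsto_const_nhds.congr' ((eventually_ge_atTop x).mono fun u hu => (min_eq_left hu).symm)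

namespace SSD

variable {P Q : Measure ℝ} [IsProbabilityMeasure P] [IsProbabilityMeasure Q]

theorem integral_min_le (h : SSD P Q) (hP : Integrable (fun x => x) P)
    (hQ : Integrable (fun x => x) Q) (u : ℝ) :
    ∫ x, min x u ∂Q ≤ ∫ x, min x u ∂P := by
  have hu := h u
  rw [integral_sub (integrableOn_Iic_cdf hP u) (integrableOn_Iic_cdf hQ u)] at hu
  rw [integral_min_eq_sub_integral_Iic_cdf hP, integral_min_eq_sub_integral_Iic_cdf hQ]
  linarith

theorem integral_le (h : SSD P Q) (hP : Integrable (fun x => x) P)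
    (hQ : Integrable (fun x => x) Q) :
    ∫ x, x ∂Q ≤ ∫ x, x ∂P :=
  le_of_tendsto_of_tendsto' (tendsto_integral_min_atTop hQ) (tendsto_integral_min_atTop hP)
    (h.integral_min_le hP hQ)

end SSD

section AffineImage

variable {P : Measure ℝ} [IsProbabilityMeasure P] (a b m : ℝ)

theorem integrable_id_map_affine (hP : Integrable (fun x => x) P) :
    Integrable (fun x => x) (P.map fun z => a + b * (z - m)) :=
  (integrable_map_measure aestronglyMeasurable_id (by fun_prop)).mpr
    ((integrable_const a).add ((hP.sub (integrable_const m)).const_mul b))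

theorem integral_id_map_affine (hP : Integrable (fun x => x) P) :
    ∫ x, x ∂(P.map fun z => a + b * (z - m)) = a + b * (∫ x, x ∂P - m) := by
  have hlin : Integrable (fun x => b * (x - m)) P := (hP.sub (integrable_const m)).const_mul b
  rw [integral_map (f := fun x => x) (by fun_prop) (by fun_prop),
    integral_add (integrable_const a) hlin,
    integral_const_mul, integral_sub hP (integrable_const m)]
  simp

end AffineImage

theorem mean_core_nonempty_of_ssd_core {N : Type*} [Fintype N]
    (ν : Finset N → Measure ℝ)
    (hprob : ∀ S : Finset N, S.Nonempty → IsProbabilityMeasure (ν S))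
    (hint : ∀ S : Finset N, S.Nonempty → Integrable (fun z => z) (ν S))
    (μ : Finset N → ℝ)
    (hμ : ∀ S : Finset N, S.Nonempty → μ S = ∫ z, z ∂(ν S))
    (hμ0 : μ ∅ = 0)
    (d r : N → ℝ)
    (hdN : ∑ i : N, d i = μ Finset.univ)
    (hssd : ∀ S : Finset N, S.Nonempty →
      SSD ((ν Finset.univ).map
          (fun z => (∑ i ∈ S, d i) + (∑ i ∈ S, r i) * (z - μ Finset.univ)))
        (ν S)) :
    d ∈ core μ ∧ (core μ).Nonempty := by
  have hd : ∀ S : Finset N, μ S ≤ ∑ i ∈ S, d i := by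
    intro S
    rcases S.eq_empty_or_nonempty with rfl | hS
    · simp [hμ0]
    have huniv : (Finset.univ : Finset N).Nonempty := hS.mono S.subset_univ
    have := hprob S hS
    have := hprob _ huniv
    have := Measure.isProbabilityMeasure_map (μ := ν Finset.univ)
      (f := fun z => (∑ i ∈ S, d i) + (∑ i ∈ S, r i) * (z - μ Finset.univ)) (by fun_prop)
    have hmean := (hssd S hS).integral_le
      (integrable_id_map_affine _ _ _ (hint _ huniv)) (hint S hS)
    rwa [integral_id_map_affine _ _ _ (hint _ huniv), ← hμ _ huniv, sub_self, mul_zero, add_zero,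
      ← hμ S hS] at hmean
  exact ⟨⟨hd, hdN⟩, d, hd, hdN⟩
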